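/- Let s ≥ s' (componentwise) be two starting values of the block magnetization chain. Then for every t ≥ 0 the vector of differences of expectations satisfies 0 ≤ (E_s[S_t^{(1)}] − E_{s'}[S_t^{(1)}], …, E_s[S_t^{(m)}] − E_{s'}[S_t^{(m)}])^T ≤ Q^t (s − s') componentwise, where Q = (1−1/n)I + (β/n)B. -/

import Mathlib

open Finset MeasureTheory Real Filter

namespace MultiIsing

/-- The real spin value attached to a Boolean spin. -/
def spin (b : Bool) : ℝ := if b then 1 else -1

/-- `r₊(s) = e^{βs}/(e^{βs}+e^{-βs})`. -/
noncomputable def rp (β s : ℝ) : ℝ :=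
  Real.exp (β * s) / (Real.exp (β * s) + Real.exp (-(β * s)))

/-- `r₋(s) = e^{-βs}/(e^{βs}+e^{-βs})`. -/
noncomputable def rm (β s : ℝ) : ℝ :=
  Real.exp (-(β * s)) / (Real.exp (β * s) + Real.exp (-(β * s)))

variable {m : ℕ}

/-- `g : Fin n → Fin m` realizes the partition of `n` vertices into groups
of sizes `n * p i`. -/
def IsPartition (n : ℕ) (p : Fin m → ℝ) (g : Fin n → Fin m) : Prop :=
  0 < n ∧ ∀ i, ((Finset.univ.filter fun v => g v = i).card : ℝ) = n * p i

/-- Standing hypotheses on the parameters of the multi-component Ising model. -/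
structure Params (m : ℕ) (p : Fin m → ℝ) (k : Fin m → Fin m → ℝ) : Prop where
  hm : 0 < m
  hp : ∀ i, 0 < p i
  hpsum : ∑ i, p i = 1
  hkpos : ∀ i j, 0 < k i j
  hksymm : ∀ i j, k i j = k j i

/-- `a` is the (normalized, positive) Perron–Frobenius left eigenvector of the
matrix `B = (p i * k i j)`; its eigenvalue is then necessarily
`∑ i j, a i * p i * k i j`. -/
structure PFvec (m : ℕ) (p : Fin m → ℝ) (k : Fin m → Fin m → ℝ) (a : Fin m → ℝ) : Prop where
  hpos : ∀ i, 0 < a i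
  hsum : ∑ i, a i = 1
  heig : ∀ j, ∑ i, a i * (p i * k i j) = (∑ i, ∑ j, a i * (p i * k i j)) * a j

/-- The critical inverse temperature `β_cr = 1 / (∑ i j, a i * p i * k i j)`. -/
noncomputable def betaCr (p : Fin m → ℝ) (k : Fin m → Fin m → ℝ) (a : Fin m → ℝ) : ℝ :=
  1 / (∑ i, ∑ j, a i * (p i * k i j))

/-- The mean field `S^v = ∑_{w ≠ v} K(v,w) σ(w)` at vertex `v`. -/
noncomputable def meanField (n : ℕ) (k : Fin m → Fin m → ℝ) (g : Fin n → Fin m)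
    (σ : Fin n → Bool) (v : Fin n) : ℝ :=
  ∑ w ∈ Finset.univ.filter (fun w => w ≠ v), (k (g v) (g w) / n) * spin (σ w)

/-- One-step transition probabilities of the Glauber dynamics: a uniformly chosen
vertex is refreshed to `±1` with probabilities `r±(S^v)`. -/
noncomputable def glauber (n : ℕ) (β : ℝ) (k : Fin m → Fin m → ℝ) (g : Fin n → Fin m)
    (σ σ' : Fin n → Bool) : ℝ :=
  (1 / n) * ∑ v,
    ((if σ' = Function.update σ v true then rp β (meanField n k g σ v) else 0)
      + (if σ' = Function.update σ v false then rm β (meanField n k g σ v) else 0))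

/-- `t`-step transition probabilities of a transition kernel on a finite state space. -/
noncomputable def iter {Ω : Type*} [Fintype Ω] [DecidableEq Ω] (P : Ω → Ω → ℝ) :
    ℕ → Ω → Ω → ℝ
  | 0 => fun x y => if x = y then 1 else 0
  | (t + 1) => fun x y => ∑ z, iter P t x z * P z y

/-- The Gibbs measure `μ_n(σ) ∝ exp(β ∑_{unordered pairs v ≠ w} K(v,w) σ(v) σ(w))`. -/
noncomputable def gibbs (n : ℕ) (β : ℝ) (k : Fin m → Fin m → ℝ) (g : Fin n → Fin m)
    (σ : Fin n → Bool) : ℝ :=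
  Real.exp (β * ((1 / 2) * ∑ v, ∑ w ∈ Finset.univ.filter (fun w => w ≠ v),
      (k (g v) (g w) / n) * spin (σ v) * spin (σ w))) /
    ∑ σ' : Fin n → Bool, Real.exp (β * ((1 / 2) * ∑ v, ∑ w ∈ Finset.univ.filter (fun w => w ≠ v),
      (k (g v) (g w) / n) * spin (σ' v) * spin (σ' w)))

/-- The total-variation distance between two distributions on a finite space. -/
noncomputable def tvDist {Ω : Type*} [Fintype Ω] (μ ν : Ω → ℝ) : ℝ :=
  (1 / 2) * ∑ x, |μ x - ν x|

/-- The worst-case total-variation distance to stationarity after `t` steps. -/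
noncomputable def dn (n : ℕ) (β : ℝ) (k : Fin m → Fin m → ℝ) (g : Fin n → Fin m)
    (t : ℕ) : ℝ :=
  ⨆ σ : Fin n → Bool, tvDist (fun σ' => iter (glauber n β k g) t σ σ') (gibbs n β k g)

/-- The total-variation mixing time `t_mix = min {t : d_n(t) ≤ 1/4}`. -/
noncomputable def tmix (n : ℕ) (β : ℝ) (k : Fin m → Fin m → ℝ) (g : Fin n → Fin m) : ℕ :=
  sInf {t : ℕ | dn n β k g t ≤ 1 / 4}

/-- The normalized block magnetization `S^{(i)}(σ) = (1/n) ∑_{v ∈ G_i} σ(v)`. -/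
noncomputable def Smag (n : ℕ) (g : Fin n → Fin m) (σ : Fin n → Bool) (i : Fin m) : ℝ :=
  (1 / n) * ∑ v ∈ Finset.univ.filter (fun v => g v = i), spin (σ v)

/-- The unnormalized block magnetization `M^{(i)}(σ) = ∑_{v ∈ G_i} σ(v)`. -/
noncomputable def Mvec (n : ℕ) (g : Fin n → Fin m) (σ : Fin n → Bool) (i : Fin m) : ℝ :=
  ∑ v ∈ Finset.univ.filter (fun v => g v = i), spin (σ v)

/-- The `i`-th block Hamming distance between two configurations. -/
noncomputable def blockDist (n : ℕ) (g : Fin n → Fin m) (σ σ' : Fin n → Bool) (i : Fin m) : ℝ :=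
  (1 / 2) * ∑ v ∈ Finset.univ.filter (fun v => g v = i), |spin (σ v) - spin (σ' v)|

/-- The matrix `Q = (1 - 1/n) I + (β/n) B` where `B = (p i * k i j)`. -/
noncomputable def Qmat (n : ℕ) (β : ℝ) (p : Fin m → ℝ) (k : Fin m → Fin m → ℝ) :
    Matrix (Fin m) (Fin m) ℝ :=
  (1 - 1 / (n : ℝ)) • (1 : Matrix (Fin m) (Fin m) ℝ) +
    (β / n) • Matrix.of (fun i j => p i * k i j)

/-- `μ` is the law of the Markov chain with transition probabilities `P`
started at `x0`, as a measure on path space. -/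
def IsPathMeasure {Ω : Type*} [Fintype Ω] [DecidableEq Ω] [MeasurableSpace Ω]
    (P : Ω → Ω → ℝ) (x0 : Ω) (μ : Measure (ℕ → Ω)) : Prop :=
  IsProbabilityMeasure μ ∧
    ∀ t : ℕ, ∀ f : ℕ → Ω,
      (μ {ω | ∀ s ≤ t, ω s = f s}).toReal =
        (if f 0 = x0 then ∏ s ∈ Finset.range t, P (f s) (f (s + 1)) else 0)

/-- `μ` is a coupling of two copies of the Markov chain with transition
probabilities `P`, started at `x0` and `y0` respectively. -/
def IsCoupling {Ω : Type*} [Fintype Ω] [DecidableEq Ω] [MeasurableSpace Ω]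
    (P : Ω → Ω → ℝ) (x0 y0 : Ω) (μ : Measure (ℕ → Ω × Ω)) : Prop :=
  IsProbabilityMeasure μ ∧
    (∀ t : ℕ, ∀ f : ℕ → Ω,
      (μ {ω | ∀ s ≤ t, (ω s).1 = f s}).toReal =
        (if f 0 = x0 then ∏ s ∈ Finset.range t, P (f s) (f (s + 1)) else 0)) ∧
    (∀ t : ℕ, ∀ f : ℕ → Ω,
      (μ {ω | ∀ s ≤ t, (ω s).2 = f s}).toReal =
        (if f 0 = y0 then ∏ s ∈ Finset.range t, P (f s) (f (s + 1)) else 0))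


/-- The expectation of `S_t^{(i)}` for the Glauber dynamics started at `σ`. -/
noncomputable def Eexp (n : ℕ) (β : ℝ) {m : ℕ} (k : Fin m → Fin m → ℝ) (g : Fin n → Fin m)
    (σ : Fin n → Bool) (t : ℕ) (i : Fin m) : ℝ :=
  ∑ σ' : Fin n → Bool, iter (glauber n β k g) t σ σ' * Smag n g σ' i

/-!
The Glauber step `F ↦ E_σ[F(σ₁)]` maps functions that are monotone in the configuration
to monotone functions: two ordered configurations updated at the same vertex can be coupled so
that they stay ordered. On a linear function of the block magnetizations the step is explicit,
`E_σ[w ⬝ S(σ₁)] = (1 - 1/n) w ⬝ S(σ) + n⁻² ∑_v w_{g v} tanh (β S^v(σ))` with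
`tanh (β s) = r₊(s) - r₋(s)`. As `tanh` is `1`-Lipschitz and, for `σ' ≤ σ`,
`S^v(σ) - S^v(σ') ≤ (k (S(σ) - S(σ')))_{g v}`, the function `w ⬝ Q S(σ) - E_σ[w ⬝ S(σ₁)]` is
monotone whenever `w ≥ 0`. Induction on `t` then shows that `E_σ[S_t^{(i)}]` and
`(Q^t S(σ))_i - E_σ[S_t^{(i)}]` are both monotone in `σ`, which is the claim for `σ' ≤ σ`.
In general the dynamics is invariant under permutations of each block, and `s' ≤ s` allows one
to permute `σ'` inside the blocks until it lies below `σ`.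
-/

open Function Matrix

@[simp] lemma spin_true : spin true = 1 := rfl

@[simp] lemma spin_false : spin false = -1 := rfl

lemma spin_mono : Monotone spin := by
  intro a b h
  cases a <;> cases b <;> first | exact absurd h (by decide) | norm_num [spin]

lemma rp_add_rm (β s : ℝ) : rp β s + rm β s = 1 := by
  rw [rp, rm, ← add_div, div_self (by positivity)]

lemma rp_eq_sigmoid (β s : ℝ) : rp β s = sigmoid (2 * (β * s)) := by
  have h : rexp (β * s) * rexp (-(2 * (β * s))) = rexp (-(β * s)) := by
    rw [← Real.exp_add]; ring_nf
  rw [rp, sigmoid_def, div_eq_iff (by positivity), ← h]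
  field_simp

lemma rp_nonneg (β s : ℝ) : 0 ≤ rp β s := by
  unfold rp; positivity

lemma rm_nonneg (β s : ℝ) : 0 ≤ rm β s := by
  unfold rm; positivity

lemma rp_mono {β : ℝ} (hβ : 0 ≤ β) : Monotone (rp β) := fun s s' h => by
  simp only [rp_eq_sigmoid]
  exact sigmoid_monotone (by gcongr)

lemma sigmoid_sub_sigmoid_le {a b : ℝ} (h : a ≤ b) : sigmoid b - sigmoid a ≤ (b - a) / 4 := by
  have hderiv (x : ℝ) : HasDerivAt (fun x => x / 4 - sigmoid x)
      (1 / 4 - sigmoid x * (1 - sigmoid x)) x :=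
    ((hasDerivAt_id x).div_const 4).sub (hasDerivAt_sigmoid x)
  have hmono : Monotone fun x => x / 4 - sigmoid x :=
    monotone_of_deriv_nonneg (fun x => (hderiv x).differentiableAt) fun x => by
      rw [(hderiv x).deriv]
      nlinarith [sq_nonneg (sigmoid x - 1 / 2)]
  linarith [hmono h]

lemma rp_sub_rm_sub_le {β s s' : ℝ} (hβ : 0 ≤ β) (h : s' ≤ s) :
    (rp β s - rm β s) - (rp β s' - rm β s') ≤ β * (s - s') := by
  have := sigmoid_sub_sigmoid_le (show 2 * (β * s') ≤ 2 * (β * s) by gcongr)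
  rw [← rp_eq_sigmoid, ← rp_eq_sigmoid] at this
  linarith [rp_add_rm β s, rp_add_rm β s']

lemma rp_mul_add_rm_mul_le {β s s' x x' y y' : ℝ} (hβ : 0 ≤ β) (hs : s' ≤ s)
    (hx : x' ≤ x) (hy : y' ≤ y) (hyx : y ≤ x) :
    rp β s' * x' + rm β s' * y' ≤ rp β s * x + rm β s * y := by
  have hrm (s : ℝ) : rm β s = 1 - rp β s := by linarith [rp_add_rm β s]
  calc rp β s' * x' + rm β s' * y' ≤ rp β s' * x + rm β s' * y := by
        gcongr
        · exact rp_nonneg β s'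
        · exact rm_nonneg β s'
    _ = y + rp β s' * (x - y) := by rw [hrm]; ring
    _ ≤ y + rp β s * (x - y) := by gcongr; exact rp_mono hβ hs
    _ = rp β s * x + rm β s * y := by rw [hrm]; ring

variable {n : ℕ} {β : ℝ} {p : Fin m → ℝ} {k : Fin m → Fin m → ℝ} {g : Fin n → Fin m}

noncomputable def glauberAvg (n : ℕ) (β : ℝ) (k : Fin m → Fin m → ℝ)
    (g : Fin n → Fin m) (F : (Fin n → Bool) → ℝ) (σ : Fin n → Bool) : ℝ :=
  ∑ τ, glauber n β k g σ τ * F τ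

lemma glauberAvg_eq (F : (Fin n → Bool) → ℝ) (σ : Fin n → Bool) :
    glauberAvg n β k g F σ =
      (1 / n) * ∑ v, (rp β (meanField n k g σ v) * F (update σ v true)
        + rm β (meanField n k g σ v) * F (update σ v false)) := by
  simp only [glauberAvg, glauber, mul_assoc, ← Finset.mul_sum, Finset.sum_mul]
  rw [Finset.sum_comm]
  simp [add_mul, ite_mul, Finset.sum_add_distrib]

lemma glauberAvg_sub (F G : (Fin n → Bool) → ℝ) (σ : Fin n → Bool) :
    glauberAvg n β k g (fun τ => F τ - G τ) σ =
      glauberAvg n β k g F σ - glauberAvg n β k g G σ := by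
  simp only [glauberAvg, mul_sub, Finset.sum_sub_distrib]

lemma meanField_mono (hk : ∀ i j, 0 ≤ k i j) (v : Fin n) :
    Monotone fun σ => meanField n k g σ v := fun _ _ h =>
  Finset.sum_le_sum fun w _ =>
    mul_le_mul_of_nonneg_left (spin_mono (h w)) (div_nonneg (hk _ _) n.cast_nonneg)

lemma glauberAvg_mono (hβ : 0 ≤ β) (hk : ∀ i j, 0 ≤ k i j) {F : (Fin n → Bool) → ℝ}
    (hF : Monotone F) : Monotone (glauberAvg n β k g F) := by
  intro σ' σ h
  rw [glauberAvg_eq, glauberAvg_eq]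
  refine mul_le_mul_of_nonneg_left (Finset.sum_le_sum fun v _ => ?_) (by positivity)
  have hupd (b : Bool) : update σ' v b ≤ update σ v b :=
    update_le_update_iff.2 ⟨le_rfl, fun w _ => h w⟩
  exact rp_mul_add_rm_mul_le hβ (meanField_mono hk v h) (hF (hupd true)) (hF (hupd false))
    (hF (update_le_update_iff'.2 (Bool.false_le true)))

lemma Smag_mono : Monotone (Smag n g) := fun _ _ h _ =>
  mul_le_mul_of_nonneg_left (Finset.sum_le_sum fun v _ => spin_mono (h v)) (by positivity)

lemma Smag_update (σ : Fin n → Bool) (v : Fin n) (b : Bool) :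
    Smag n g (update σ v b) = Smag n g σ + Pi.single (g v) ((spin b - spin (σ v)) / n) := by
  have hspin (w : Fin n) :
      spin (update σ v b w) = spin (σ w) + if w = v then spin b - spin (σ v) else 0 := by
    rcases eq_or_ne w v with rfl | hw <;> simp [*]
  funext i
  simp only [Smag, hspin, Finset.sum_add_distrib, Finset.sum_ite_eq', Finset.mem_filter,
    Finset.mem_univ, true_and, Pi.add_apply]
  rcases eq_or_ne (g v) i with rfl | hi
  · simp; ring
  · simp [hi, Ne.symm hi]

lemma dotProduct_Smag (w : Fin m → ℝ) (σ : Fin n → Bool) :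
    w ⬝ᵥ Smag n g σ = (1 / n) * ∑ v, w (g v) * spin (σ v) := by
  rw [← Finset.sum_fiberwise Finset.univ g, dotProduct, Finset.mul_sum]
  refine Finset.sum_congr rfl fun j _ => ?_
  rw [Smag, Finset.mul_sum, Finset.mul_sum, Finset.mul_sum]
  refine Finset.sum_congr rfl fun v hv => ?_
  rw [(Finset.mem_filter.1 hv).2]
  ring

lemma glauberAvg_dotProduct_Smag (hn : n ≠ 0) (w : Fin m → ℝ) (σ : Fin n → Bool) :
    glauberAvg n β k g (fun τ => w ⬝ᵥ Smag n g τ) σ =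
      (1 - 1 / n) * (w ⬝ᵥ Smag n g σ) + 1 / n ^ 2 *
        ∑ v, w (g v) * (rp β (meanField n k g σ v) - rm β (meanField n k g σ v)) := by
  set ℓ := w ⬝ᵥ Smag n g σ with hℓ_def
  have hv (v : Fin n) : rp β (meanField n k g σ v) * (w ⬝ᵥ Smag n g (update σ v true))
      + rm β (meanField n k g σ v) * (w ⬝ᵥ Smag n g (update σ v false))
      = ℓ + w (g v) * (rp β (meanField n k g σ v) - rm β (meanField n k g σ v)) / n
        - w (g v) * spin (σ v) / n := by
    simp only [Smag_update, dotProduct_add, dotProduct_single, spin_true, spin_false]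
    linear_combination (ℓ - w (g v) * spin (σ v) / n) * rp_add_rm β (meanField n k g σ v)
  have hℓ : ∑ v, w (g v) * spin (σ v) = n * ℓ := by
    rw [hℓ_def, dotProduct_Smag]; field_simp
  rw [glauberAvg_eq, Finset.sum_congr rfl fun v _ => hv v, Finset.sum_sub_distrib,
    Finset.sum_add_distrib, ← Finset.sum_div, ← Finset.sum_div, hℓ]
  simp only [Finset.sum_const, Finset.card_univ, Fintype.card_fin, nsmul_eq_mul]
  field_simp
  ring

lemma meanField_eq (σ : Fin n → Bool) (v : Fin n) :
    meanField n k g σ v = k (g v) ⬝ᵥ Smag n g σ - k (g v) (g v) / n * spin (σ v) := by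
  rw [meanField, Finset.filter_ne', Finset.sum_erase_eq_sub (Finset.mem_univ v),
    dotProduct_Smag, Finset.mul_sum]
  congr 1
  exact Finset.sum_congr rfl fun w _ => by ring

lemma meanField_sub_le (hk : ∀ i j, 0 ≤ k i j) {σ σ' : Fin n → Bool} (h : σ' ≤ σ)
    (v : Fin n) :
    meanField n k g σ v - meanField n k g σ' v ≤ k (g v) ⬝ᵥ (Smag n g σ - Smag n g σ') := by
  have hself : k (g v) (g v) / n * spin (σ' v) ≤ k (g v) (g v) / n * spin (σ v) :=
    mul_le_mul_of_nonneg_left (spin_mono (h v)) (div_nonneg (hk _ _) n.cast_nonneg)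
  rw [meanField_eq, meanField_eq, dotProduct_sub]
  linarith

lemma IsPartition.sum_comp (hg : IsPartition n p g) (f : Fin m → ℝ) :
    ∑ v, f (g v) = n * ∑ j, p j * f j := by
  rw [← Finset.sum_fiberwise' Finset.univ g f, Finset.mul_sum]
  simp [hg.2, mul_assoc]

lemma sum_mul_rp_sub_rm_sub_le (hg : IsPartition n p g) (hβ : 0 ≤ β) (hk : ∀ i j, 0 ≤ k i j)
    {w : Fin m → ℝ} (hw : 0 ≤ w) {σ σ' : Fin n → Bool} (h : σ' ≤ σ) :
    ∑ v, w (g v) * (rp β (meanField n k g σ v) - rm β (meanField n k g σ v))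
      - ∑ v, w (g v) * (rp β (meanField n k g σ' v) - rm β (meanField n k g σ' v))
      ≤ β * n * ∑ j, w j * p j * (k j ⬝ᵥ (Smag n g σ - Smag n g σ')) := by
  rw [← Finset.sum_sub_distrib]
  calc _ ≤ ∑ v, w (g v) * (β * (k (g v) ⬝ᵥ (Smag n g σ - Smag n g σ'))) :=
        Finset.sum_le_sum fun v _ => by
          rw [← mul_sub]
          refine mul_le_mul_of_nonneg_left ?_ (hw _)
          exact (rp_sub_rm_sub_le hβ (meanField_mono hk v h)).trans
            (mul_le_mul_of_nonneg_left (meanField_sub_le hk h v) hβ)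
    _ = _ := by
        rw [hg.sum_comp fun j => w j * (β * (k j ⬝ᵥ (Smag n g σ - Smag n g σ'))),
          Finset.mul_sum, Finset.mul_sum]
        exact Finset.sum_congr rfl fun j _ => by ring

lemma dotProduct_Qmat_mulVec (w x : Fin m → ℝ) :
    w ⬝ᵥ (Qmat n β p k *ᵥ x) =
      (1 - 1 / n) * (w ⬝ᵥ x) + β / n * ∑ j, w j * p j * (k j ⬝ᵥ x) := by
  simp only [Qmat, add_mulVec, smul_mulVec, one_mulVec, dotProduct_add, dotProduct_smul,
    smul_eq_mul]
  congr 2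
  simp only [dotProduct, mulVec, of_apply, Finset.mul_sum]
  exact Finset.sum_congr rfl fun j _ => Finset.sum_congr rfl fun l _ => by ring

lemma Qmat_pow_nonneg (hp : ∀ i, 0 ≤ p i) (hk : ∀ i j, 0 ≤ k i j) (hβ : 0 ≤ β) (t : ℕ)
    (i j : Fin m) : 0 ≤ (Qmat n β p k ^ t) i j := by
  have hQ (i j : Fin m) : 0 ≤ Qmat n β p k i j := by
    have h1 : (1 : ℝ) / n ≤ 1 := by simpa only [one_div] using Nat.cast_inv_le_one n
    have h2 := mul_nonneg (div_nonneg hβ n.cast_nonneg) (mul_nonneg (hp i) (hk i j))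
    simp only [Qmat, Matrix.add_apply, Matrix.smul_apply, one_apply, of_apply, smul_eq_mul]
    split_ifs <;> linarith
  induction t generalizing j with
  | zero => rw [pow_zero, one_apply]; split_ifs <;> norm_num
  | succ t ih =>
    rw [pow_succ, mul_apply]
    exact Finset.sum_nonneg fun l _ => mul_nonneg (ih l) (hQ l j)

lemma monotone_dotProduct_Qmat_mulVec_sub_glauberAvg (hg : IsPartition n p g) (hβ : 0 ≤ β)
    (hk : ∀ i j, 0 ≤ k i j) {w : Fin m → ℝ} (hw : 0 ≤ w) :
    Monotone fun σ => w ⬝ᵥ (Qmat n β p k *ᵥ Smag n g σ)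
      - glauberAvg n β k g (fun τ => w ⬝ᵥ Smag n g τ) σ := by
  intro σ' σ h
  have hn : (n : ℝ) ≠ 0 := Nat.cast_ne_zero.2 hg.1.ne'
  have hdrift := mul_le_mul_of_nonneg_left (sum_mul_rp_sub_rm_sub_le hg hβ hk hw h)
    (by positivity : (0 : ℝ) ≤ 1 / n ^ 2)
  have hQ := dotProduct_Qmat_mulVec (n := n) (β := β) (p := p) (k := k) w
    (Smag n g σ - Smag n g σ')
  rw [mulVec_sub, dotProduct_sub, dotProduct_sub] at hQ
  have hscale (x : ℝ) : 1 / (n : ℝ) ^ 2 * (β * n * x) = β / n * x := by field_simp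
  dsimp only
  rw [glauberAvg_dotProduct_Smag hg.1.ne', glauberAvg_dotProduct_Smag hg.1.ne']
  linarith [hscale (∑ j, w j * p j * (k j ⬝ᵥ (Smag n g σ - Smag n g σ')))]

lemma iter_eq_pow {Ω : Type*} [Fintype Ω] [DecidableEq Ω] (P : Ω → Ω → ℝ) (t : ℕ)
    (x y : Ω) : iter P t x y = (of P ^ t) x y := by
  induction t generalizing y with
  | zero => simp [iter, one_apply]
  | succ t ih => simp [iter, pow_succ, mul_apply, ih]

lemma Eexp_zero (σ : Fin n → Bool) (i : Fin m) : Eexp n β k g σ 0 i = Smag n g σ i := by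
  simp [Eexp, iter]

lemma Eexp_succ (σ : Fin n → Bool) (t : ℕ) (i : Fin m) :
    Eexp n β k g σ (t + 1) i = glauberAvg n β k g (fun τ => Eexp n β k g τ t i) σ := by
  simp only [Eexp, glauberAvg, iter_eq_pow, pow_succ', mul_apply, of_apply, Finset.sum_mul,
    Finset.mul_sum, mul_assoc]
  exact Finset.sum_comm

theorem monotone_Eexp_and_Qmat_pow_mulVec_sub_Eexp (hg : IsPartition n p g)
    (hp : ∀ i, 0 ≤ p i) (hk : ∀ i j, 0 ≤ k i j) (hβ : 0 ≤ β) (t : ℕ) (i : Fin m) :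
    Monotone (fun σ => Eexp n β k g σ t i) ∧
      Monotone (fun σ => (Qmat n β p k ^ t *ᵥ Smag n g σ) i - Eexp n β k g σ t i) := by
  induction t generalizing i with
  | zero =>
    simp only [Eexp_zero, pow_zero, one_mulVec, sub_self]
    exact ⟨fun _ _ h => Smag_mono h i, monotone_const⟩
  | succ t ih =>
    simp only [Eexp_succ]
    refine ⟨glauberAvg_mono hβ hk (ih i).1, ?_⟩
    set Q := Qmat n β p k
    have hsplit : (fun σ => (Q ^ (t + 1) *ᵥ Smag n g σ) i
          - glauberAvg n β k g (fun τ => Eexp n β k g τ t i) σ)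
        = (fun σ => (Q ^ t) i ⬝ᵥ (Q *ᵥ Smag n g σ)
            - glauberAvg n β k g (fun τ => (Q ^ t) i ⬝ᵥ Smag n g τ) σ)
          + glauberAvg n β k g (fun τ => (Q ^ t *ᵥ Smag n g τ) i - Eexp n β k g τ t i) := by
      funext σ
      rw [Pi.add_apply, glauberAvg_sub, pow_succ, ← mulVec_mulVec]
      simp only [mulVec]
      ring
    rw [hsplit]
    exact (monotone_dotProduct_Qmat_mulVec_sub_glauberAvg hg hβ hk
      fun j => Qmat_pow_nonneg hp hk hβ t i j).add (glauberAvg_mono hβ hk (ih i).2)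

lemma iter_apply_equiv {Ω : Type*} [Fintype Ω] [DecidableEq Ω] {P : Ω → Ω → ℝ}
    (e : Ω ≃ Ω) (he : ∀ x y, P (e x) (e y) = P x y) (t : ℕ) (x y : Ω) :
    iter P t (e x) (e y) = iter P t x y := by
  induction t generalizing y with
  | zero => simp [iter]
  | succ t ih =>
    simp only [iter]
    rw [← e.sum_comp]
    simp [ih, he]

section BlockPerm

variable {ψ : Equiv.Perm (Fin n)}

lemma Smag_comp_perm (hψ : ∀ v, g (ψ v) = g v) (σ : Fin n → Bool) :
    Smag n g (σ ∘ ψ) = Smag n g σ := by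
  funext i
  simp only [Smag, Finset.sum_filter, Function.comp_apply]
  rw [← Equiv.sum_comp ψ (fun v => if g v = i then spin (σ v) else 0)]
  simp [hψ]

lemma meanField_comp_perm (hψ : ∀ v, g (ψ v) = g v) (σ : Fin n → Bool) (v : Fin n) :
    meanField n k g (σ ∘ ψ) v = meanField n k g σ (ψ v) := by
  rw [meanField_eq, meanField_eq, Smag_comp_perm hψ, hψ, Function.comp_apply]

lemma glauber_comp_perm (hψ : ∀ v, g (ψ v) = g v) (σ τ : Fin n → Bool) :
    glauber n β k g (σ ∘ ψ) (τ ∘ ψ) = glauber n β k g σ τ := by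
  have hupd (v : Fin n) (b : Bool) : update (σ ∘ ψ) v b = update σ (ψ v) b ∘ ψ := by
    rw [update_comp_equiv, Equiv.symm_apply_apply]
  have hcomp (ρ : Fin n → Bool) : τ ∘ ψ = ρ ∘ ψ ↔ τ = ρ :=
    ψ.surjective.injective_comp_right.eq_iff
  simp only [glauber, hupd, hcomp, meanField_comp_perm hψ]
  rw [Equiv.sum_comp ψ fun v => (if τ = update σ v true then rp β (meanField n k g σ v) else 0)
    + if τ = update σ v false then rm β (meanField n k g σ v) else 0]

lemma Eexp_comp_perm (hψ : ∀ v, g (ψ v) = g v) (σ : Fin n → Bool) (t : ℕ) (i : Fin m) :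
    Eexp n β k g (σ ∘ ψ) t i = Eexp n β k g σ t i := by
  let e : (Fin n → Bool) ≃ (Fin n → Bool) := ψ.symm.arrowCongr (Equiv.refl Bool)
  have he (ρ : Fin n → Bool) : e ρ = ρ ∘ ψ := rfl
  have hiter := iter_apply_equiv (P := glauber n β k g) e
    (fun ρ ρ' => by simp only [he, glauber_comp_perm hψ]) t
  rw [Eexp, Eexp, ← e.sum_comp]
  refine Finset.sum_congr rfl fun ρ _ => ?_
  rw [he, Smag_comp_perm hψ]
  exact congrArg (· * _) (hiter σ ρ)

end BlockPerm

lemma exists_perm_comp_eq_of_card_fiber_eq {α β : Type*} [Fintype α] [DecidableEq β]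
    {f f' : α → β} (h : ∀ b, #{a | f a = b} = #{a | f' a = b}) :
    ∃ ψ : Equiv.Perm α, f' ∘ ψ = f :=
  ⟨Equiv.ofFiberEquiv fun b =>
      Fintype.equivOfCardEq (by rw [Fintype.card_subtype, Fintype.card_subtype, h]),
    funext fun a => Equiv.ofFiberEquiv_map _ a⟩

lemma Smag_eq_card (σ : Fin n → Bool) (i : Fin m) :
    Smag n g σ i = (2 * #{v | g v = i ∧ σ v = true} - #{v | g v = i}) / n := by
  have hspin (b : Bool) : spin b = 2 * (if b = true then 1 else 0) - 1 := by
    cases b <;> norm_num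
  simp only [Smag, hspin, Finset.sum_sub_distrib, ← Finset.mul_sum, Finset.sum_boole,
    Finset.filter_filter, Finset.sum_const, nsmul_eq_mul, mul_one]
  ring

lemma card_le_of_Smag_le (hn : 0 < n) {σ σ' : Fin n → Bool} {i : Fin m}
    (h : Smag n g σ' i ≤ Smag n g σ i) :
    #{v | g v = i ∧ σ' v = true} ≤ #{v | g v = i ∧ σ v = true} := by
  rw [Smag_eq_card, Smag_eq_card, div_le_div_iff_of_pos_right (by exact_mod_cast hn)] at h
  have : (#{v | g v = i ∧ σ' v = true} : ℝ) ≤ #{v | g v = i ∧ σ v = true} := by linarith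
  exact_mod_cast this

lemma exists_le_card_eq {σ σ' : Fin n → Bool}
    (h : ∀ i, #{v | g v = i ∧ σ' v = true} ≤ #{v | g v = i ∧ σ v = true}) :
    ∃ σ'' ≤ σ, ∀ i, #{v | g v = i ∧ σ'' v = true} = #{v | g v = i ∧ σ' v = true} := by
  choose T hT hTcard using fun i => Finset.exists_subset_card_eq (h i)
  refine ⟨fun v => decide (v ∈ T (g v)), fun v => ?_, fun i => ?_⟩
  · by_cases hv : v ∈ T (g v)
    · simp [hv, (Finset.mem_filter.1 (hT _ hv)).2.2]
    · simp [hv]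
  · rw [← hTcard i]
    congr 1
    ext v
    simp only [Finset.mem_filter, Finset.mem_univ, true_and, decide_eq_true_eq]
    constructor
    · rintro ⟨rfl, hv⟩
      exact hv
    · intro hv
      have hgv := (Finset.mem_filter.1 (hT i hv)).2.1
      exact ⟨hgv, hgv ▸ hv⟩

lemma exists_perm_comp_le (hn : 0 < n) {σ σ' : Fin n → Bool}
    (h : ∀ i, Smag n g σ' i ≤ Smag n g σ i) :
    ∃ ψ : Equiv.Perm (Fin n), (∀ v, g (ψ v) = g v) ∧ σ' ∘ ψ ≤ σ := by
  obtain ⟨σ'', hle, hcard⟩ := exists_le_card_eq fun i => card_le_of_Smag_le hn (h i)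
  have hsplit (ρ : Fin n → Bool) (i : Fin m) :
      #{v | g v = i ∧ ρ v = true} + #{v | g v = i ∧ ρ v = false} = #{v | g v = i} := by
    rw [← Finset.card_filter_add_card_filter_not (s := {v | g v = i}) (fun v => ρ v = true),
      Finset.filter_filter, Finset.filter_filter]
    simp only [Bool.not_eq_true]
  obtain ⟨ψ, hψ⟩ := exists_perm_comp_eq_of_card_fiber_eq
    (f := fun v => (g v, σ'' v)) (f' := fun v => (g v, σ' v)) fun ⟨i, b⟩ => by
      simp only [Prod.mk.injEq]
      cases b
      · linarith [hsplit σ'' i, hsplit σ' i, hcard i]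
      · exact hcard i
  refine ⟨ψ, fun v => congrArg Prod.fst (congrFun hψ v), fun v => ?_⟩
  rw [Function.comp_apply, show σ' (ψ v) = σ'' v from congrArg Prod.snd (congrFun hψ v)]
  exact hle v

theorem magnetization_expectation_contraction_general
    (m : ℕ) (p : Fin m → ℝ) (k : Fin m → Fin m → ℝ)
    (hP : Params m p k)
    (β : ℝ) (hβ : 0 ≤ β)
    (n : ℕ) (g : Fin n → Fin m) (hg : IsPartition n p g) :
    ∀ σ σ' : Fin n → Bool, (∀ i, Smag n g σ' i ≤ Smag n g σ i) →
      ∀ t : ℕ, ∀ i : Fin m,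
        0 ≤ Eexp n β k g σ t i - Eexp n β k g σ' t i ∧
        Eexp n β k g σ t i - Eexp n β k g σ' t i ≤
          (Qmat n β p k ^ t).mulVec (fun j => Smag n g σ j - Smag n g σ' j) i := by
  intro σ σ' hle t i
  obtain ⟨ψ, hψ, hψle⟩ := exists_perm_comp_le hg.1 hle
  obtain ⟨hE, hQE⟩ := monotone_Eexp_and_Qmat_pow_mulVec_sub_Eexp hg (fun j => (hP.hp j).le)
    (fun j l => (hP.hkpos j l).le) hβ t i
  have hlow := hE hψle
  have hup := hQE hψle
  simp only [Eexp_comp_perm hψ, Smag_comp_perm hψ] at hlow hup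
  change _ ∧ _ ≤ (Qmat n β p k ^ t *ᵥ (Smag n g σ - Smag n g σ')) i
  rw [mulVec_sub, Pi.sub_apply]
  constructor <;> linarith

/-- for componentwise ordered starting magnetizations `s ≥ s'`, the
difference of expected magnetizations is nonnegative and bounded by `Q^t (s - s')`
componentwise. -/
theorem magnetization_expectation_contraction
    (m : ℕ) (p : Fin m → ℝ) (k : Fin m → Fin m → ℝ)
    (hP : Params m p k)
    (β : ℝ) (hβ : 0 ≤ β)
    (n : ℕ) (hn : 0 < n) (g : Fin n → Fin m) (hg : IsPartition n p g) :
    ∀ σ σ' : Fin n → Bool, (∀ i, Smag n g σ' i ≤ Smag n g σ i) →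
      ∀ t : ℕ, ∀ i : Fin m,
        0 ≤ Eexp n β k g σ t i - Eexp n β k g σ' t i ∧
        Eexp n β k g σ t i - Eexp n β k g σ' t i ≤
          (Qmat n β p k ^ t).mulVec (fun j => Smag n g σ j - Smag n g σ' j) i :=
  magnetization_expectation_contraction_general m p k hP β hβ n g hg

end MultiIsing
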